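/- Let M₁ and M₂ be manifolds in ℝⁿ given by C^p patches through the same point x̄, and let A : ℝⁿ → Set ℝⁿ be partly smooth at x̄ relative to M₁ and also partly smooth at x̄ relative to M₂. Assume A is r-resolvent-regular at x̄ for some ū ∈ A(x̄) satisfying the strong inclusion ū ∈ ri(A(x̄)). Then there is an open neighborhood W of x̄ such that M₁ ∩ W = M₂ ∩ W. -/

import Mathlib

open Filter Topology Set RealInnerProductSpace

noncomputable section

/-- A set-valued operator `A` is upper semicontinuous: whenever `x k → x₀`,
`u k ∈ A (x k)` for all `k`, and `u k → u₀`, then `u₀ ∈ A x₀`. -/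
def UpperSC {E : Type*} [NormedAddCommGroup E] [InnerProductSpace ℝ E]
    (A : E → Set E) : Prop :=
  ∀ (x u : ℕ → E) (x₀ u₀ : E),
    Tendsto x atTop (𝓝 x₀) → (∀ k, u k ∈ A (x k)) → Tendsto u atTop (𝓝 u₀) →
      u₀ ∈ A x₀

/-- `A` is lower semicontinuous along `S` at `x₀ ∈ S`. -/
def LowerSCAlongAt {E : Type*} [NormedAddCommGroup E] [InnerProductSpace ℝ E]
    (A : E → Set E) (S : Set E) (x₀ : E) : Prop :=
  ∀ u₀ ∈ A x₀, ∀ x : ℕ → E, (∀ k, x k ∈ S) → Tendsto x atTop (𝓝 x₀) →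
    ∃ u : ℕ → E, (∀ k, u k ∈ A (x k)) ∧ Tendsto u atTop (𝓝 u₀)

/-- `A` is continuous along `S` near `xbar`: lower semicontinuous along `S` at every
point of `S` in some neighborhood of `xbar`. -/
def ContinuousAlongNear {E : Type*} [NormedAddCommGroup E] [InnerProductSpace ℝ E]
    (A : E → Set E) (S : Set E) (xbar : E) : Prop :=
  ∃ W ∈ 𝓝 xbar, ∀ x ∈ S ∩ W, LowerSCAlongAt A S x

/-- A `C^p` patch (local parametrization) of a manifold `M ⊆ E` through `xbar`,
with parameter domain `F` (playing the role of `ℝ^d`). -/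
structure CpPatch (p : ℕ∞) (F : Type*) [NormedAddCommGroup F] [InnerProductSpace ℝ F]
    {E : Type*} [NormedAddCommGroup E] [InnerProductSpace ℝ E]
    (M : Set E) (xbar : E) where
  V : Set F
  toFun : F → E
  isOpen_V : IsOpen V
  zero_mem : (0 : F) ∈ V
  contDiffOn : ContDiffOn ℝ p toFun V
  injOn : Set.InjOn toFun V
  fderiv_injective : ∀ t ∈ V, Function.Injective (fderiv ℝ toFun t)
  map_zero : toFun 0 = xbar
  image_eq : M = toFun '' V

namespace CpPatch

variable {p : ℕ∞} {F : Type*} [NormedAddCommGroup F] [InnerProductSpace ℝ F]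
  {E : Type*} [NormedAddCommGroup E] [InnerProductSpace ℝ E] {M : Set E} {xbar : E}

/-- The tangent space `T_M(x) = range (Dφ(t))` where `x = φ(t)`, `t ∈ V`. -/
def tangent (P : CpPatch p F M xbar) (x : E) : Submodule ℝ E :=
  haveI : Nonempty F := ⟨0⟩
  LinearMap.range (fderiv ℝ P.toFun (Function.invFunOn P.toFun P.V x) : F →ₗ[ℝ] E)

/-- The normal space `N_M(x) = (T_M(x))ᗮ`. -/
def normal (P : CpPatch p F M xbar) (x : E) : Submodule ℝ E :=
  (P.tangent x)ᗮ

end CpPatch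

/-- `Lin S`: the direction of the affine span of `S`. -/
def Lin {E : Type*} [NormedAddCommGroup E] [InnerProductSpace ℝ E] (S : Set E) :
    Submodule ℝ E :=
  (affineSpan ℝ S).direction

/-- `A` is partly smooth at `xbar` relative to `M` (given by the `C^p` patch `P`). -/
def PartlySmoothAt {p : ℕ∞} {F : Type*} [NormedAddCommGroup F] [InnerProductSpace ℝ F]
    {E : Type*} [NormedAddCommGroup E] [InnerProductSpace ℝ E] [FiniteDimensional ℝ E]
    (A : E → Set E) (M : Set E) (xbar : E) (P : CpPatch p F M xbar) : Prop :=
  UpperSC A ∧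
  -- Regularity
  (∃ W ∈ 𝓝 xbar, ∀ x ∈ W, (A x).Nonempty ∧ IsClosed (A x) ∧ Convex ℝ (A x)) ∧
  -- Sharpness
  P.normal xbar = Lin (A xbar) ∧
  (∃ η : E → E, ∃ W ∈ 𝓝 xbar, ContinuousOn η (M ∩ W) ∧
    ∀ x ∈ M ∩ W,
      (fun v => ((P.tangent x).orthogonalProjectionOnto v : E)) '' A x = {η x}) ∧
  -- Continuity
  ContinuousAlongNear A M xbar

/-- The `ε`-localization of `A` around `(xbar, ubar)`. -/
def Locz {E : Type*} [NormedAddCommGroup E] [InnerProductSpace ℝ E]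
    (A : E → Set E) (xbar ubar : E) (ε : ℝ) (x : E) : Set E :=
  if ‖x - xbar‖ < ε then {u ∈ A x | ‖u - ubar‖ < ε} else ∅

/-- `A` is `r`-resolvent-regular at `xbar` for `ubar`, with constants `r > 0`, `ε > 0`. -/
def ResolventRegular {E : Type*} [NormedAddCommGroup E] [InnerProductSpace ℝ E]
    (A : E → Set E) (xbar ubar : E) (r ε : ℝ) : Prop :=
  0 < r ∧ 0 < ε ∧
  (∀ x y u v : E, u ∈ Locz A xbar ubar ε x → v ∈ Locz A xbar ubar ε y →
    (inner ℝ (x - y) (u - v) : ℝ) ≥ -r * ‖x - y‖ ^ 2) ∧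
  (∀ γ : ℝ, 0 < γ → γ < 1 / r →
    ∃ W ∈ 𝓝 (xbar + γ • ubar), ∃ J : E → E, ContinuousOn J W ∧
      ∀ z ∈ W, ∀ x : E,
        (∃ u ∈ Locz A xbar ubar ε x, z = x + γ • u) ↔ x = J z)

/-- The local union `U_{γ,ε} = ⋃_{x ∈ M, ‖x-x̄‖<ε} (x + γ A_ε(x))`. -/
def LocalUnion {E : Type*} [NormedAddCommGroup E] [InnerProductSpace ℝ E]
    (A : E → Set E) (M : Set E) (xbar ubar : E) (γ ε : ℝ) : Set E :=
  {z | ∃ x ∈ M, ‖x - xbar‖ < ε ∧ ∃ u ∈ Locz A xbar ubar ε x, z = x + γ • u}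

/-!
Fix `γ ∈ (0, 1/r)` and let `J` be the single-valued continuous resolvent near `z̄ = x̄ + γ ū`.
For either manifold `M`, `J` maps a neighbourhood of `z̄` into `M`. Otherwise there are
`x_k = J z_k ∉ M` with `u_k = (z_k - x_k)/γ ∈ A_ε(x_k)` and `(x_k, u_k) → (x̄, ū)`; nearest points
`y_k ∈ M` make `x_k - y_k` normal to `M` at `y_k`, so the unit directions `(x_k - y_k)/‖x_k - y_k‖`
accumulate at a unit vector `w ∈ N_M(x̄) = Lin A(x̄)`. As `ū ∈ ri A(x̄)`, `ū + δ w ∈ A(x̄)` for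
a small `δ > 0`, and lower semicontinuity along `M` gives `v_k ∈ A(y_k)` with `v_k → ū + δ w`.
Dividing the hypomonotonicity inequality `⟪x_k - y_k, u_k - v_k⟫ ≥ -r ‖x_k - y_k‖²` by
`‖x_k - y_k‖` and passing to the limit gives `-δ = ⟪w, ū - (ū + δ w)⟫ ≥ 0`.

Conversely, for `x ∈ M₁` near `x̄` lower semicontinuity provides `u ∈ A_ε(x)` near `ū`; then
`x = J (x + γ u)` with `x + γ u` near `z̄`, so `x ∈ M₂`. By symmetry `M₁` and `M₂` agree near `x̄`.
-/

section InnerProductSpace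

variable {E : Type*} [NormedAddCommGroup E] [InnerProductSpace ℝ E]

lemma mem_locz_iff {A : E → Set E} {xbar ubar : E} {ε : ℝ} {x u : E} :
    u ∈ Locz A xbar ubar ε x ↔ ‖x - xbar‖ < ε ∧ u ∈ A x ∧ ‖u - ubar‖ < ε := by
  unfold Locz
  split_ifs with h <;> simp [h]

lemma eventually_mem_locz {A : E → Set E} {xbar ubar u₀ : E} {ε : ℝ} {x u : ℕ → E}
    (hε : 0 < ε) (hx : Tendsto x atTop (𝓝 xbar)) (hu : Tendsto u atTop (𝓝 u₀))
    (hu₀ : ‖u₀ - ubar‖ < ε) (huA : ∀ k, u k ∈ A (x k)) :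
    ∀ᶠ k in atTop, u k ∈ Locz A xbar ubar ε (x k) := by
  have hx' := hx (Metric.ball_mem_nhds xbar hε)
  have hu' := hu (Metric.isOpen_ball.mem_nhds (show u₀ ∈ Metric.ball ubar ε by
    rwa [Metric.mem_ball, dist_eq_norm]))
  filter_upwards [hx', hu'] with k hxk huk
  rw [Set.mem_preimage, Metric.mem_ball, dist_eq_norm] at hxk huk
  exact mem_locz_iff.2 ⟨hxk, huA k, huk⟩

lemma inner_nonneg_of_tendsto_of_hypomonotone {x y u v : ℕ → E} {w u₀ v₀ : E} {r : ℝ}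
    (hxy : Tendsto (fun k => x k - y k) atTop (𝓝 0))
    (hw : Tendsto (fun k => ‖x k - y k‖⁻¹ • (x k - y k)) atTop (𝓝 w))
    (hu : Tendsto u atTop (𝓝 u₀)) (hv : Tendsto v atTop (𝓝 v₀))
    (hmono : ∀ᶠ k in atTop, -r * ‖x k - y k‖ ^ 2 ≤ ⟪x k - y k, u k - v k⟫) :
    0 ≤ ⟪w, u₀ - v₀⟫ := by
  have hscaled : ∀ᶠ k in atTop,
      -r * ‖x k - y k‖ ≤ ⟪‖x k - y k‖⁻¹ • (x k - y k), u k - v k⟫ := by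
    filter_upwards [hmono] with k hk
    rw [real_inner_smul_left]
    rcases (norm_nonneg (x k - y k)).eq_or_lt with h0 | hpos
    · simp [← h0]
    · rw [le_inv_mul_iff₀ hpos]
      linarith
  have hlim : Tendsto (fun k => -r * ‖x k - y k‖) atTop (𝓝 (-r * 0)) := by
    simpa using (hxy.norm).const_mul (-r)
  simpa using le_of_tendsto_of_tendsto hlim (hw.inner (hu.sub hv)) hscaled

end InnerProductSpace

lemma eventually_add_smul_mem_of_mem_intrinsicInterior {E : Type*} [NormedAddCommGroup E]
    [NormedSpace ℝ E] {S : Set E} {u w : E} (hu : u ∈ intrinsicInterior ℝ S)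
    (hw : w ∈ (affineSpan ℝ S).direction) :
    ∀ᶠ t in 𝓝 (0 : ℝ), u + t • w ∈ S := by
  obtain ⟨y, hy, rfl⟩ := mem_intrinsicInterior.1 hu
  let line : ℝ → affineSpan ℝ S := fun t =>
    ⟨(y : E) + t • w, by
      simpa [vadd_eq_add, add_comm] using
        AffineSubspace.vadd_mem_of_mem_direction (Submodule.smul_mem _ t hw) y.2⟩
  have hline : Continuous line := by fun_prop
  have h0 : line 0 = y := Subtype.ext (by simp [line])
  exact hline.continuousAt.preimage_mem_nhds (h0 ▸ mem_interior_iff_mem_nhds.1 hy)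

lemma inner_sub_fderiv_eq_zero_of_isLocalMin_dist {F E : Type*} [NormedAddCommGroup F]
    [NormedSpace ℝ F] [NormedAddCommGroup E] [InnerProductSpace ℝ E] {f : F → E} {x : E}
    {t : F} (hf : DifferentiableAt ℝ f t) (hmin : IsLocalMin (fun s => dist x (f s)) t)
    (s : F) : ⟪x - f t, fderiv ℝ f t s⟫ = 0 := by
  have hsq : IsLocalMin (fun s => ‖x - f s‖ ^ 2) t := by
    filter_upwards [hmin] with s' hs'
    simp only [← dist_eq_norm]
    gcongr
  have hderiv := ((hasFDerivAt_const x t).sub hf.hasFDerivAt).norm_sq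
  have := DFunLike.congr_fun (hsq.hasFDerivAt_eq_zero hderiv) s
  simpa [inner_sub_left, sub_eq_zero, eq_comm (a := ⟪x, _⟫)] using this

namespace CpPatch

variable {p : ℕ∞} {F : Type*} [NormedAddCommGroup F] [InnerProductSpace ℝ F]
  {E : Type*} [NormedAddCommGroup E] [InnerProductSpace ℝ E] {M : Set E} {xbar : E}

lemma mem_of_mem_V (P : CpPatch p F M xbar) {t : F} (ht : t ∈ P.V) : P.toFun t ∈ M :=
  (Set.ext_iff.1 P.image_eq _).2 ⟨t, ht, rfl⟩

lemma base_mem (P : CpPatch p F M xbar) : xbar ∈ M :=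
  P.map_zero ▸ P.mem_of_mem_V P.zero_mem

lemma mem_normal_base_iff (P : CpPatch p F M xbar) {w : E} :
    w ∈ P.normal xbar ↔ ∀ s, ⟪w, fderiv ℝ P.toFun 0 s⟫ = 0 := by
  have hex : ∃ t ∈ P.V, P.toFun t = xbar := ⟨0, P.zero_mem, P.map_zero⟩
  have hinv : Function.invFunOn P.toFun P.V xbar = 0 :=
    P.injOn (Function.invFunOn_mem hex) P.zero_mem
      ((Function.invFunOn_eq hex).trans P.map_zero.symm)
  simp [normal, tangent, hinv, Submodule.mem_orthogonal']

lemma tendsto_zero_of_tendsto_comp (P : CpPatch p F M xbar) {ι : Type*} {l : Filter ι}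
    {K : Set F} (hK : IsCompact K) (hKV : K ⊆ P.V) {t : ι → F} (htK : ∀ i, t i ∈ K)
    (ht : Tendsto (P.toFun ∘ t) l (𝓝 xbar)) : Tendsto t l (𝓝 0) := by
  refine hK.tendsto_nhds_of_unique_mapClusterPt (Eventually.of_forall htK) fun t₀ ht₀K hcl => ?_
  have hφ : ContinuousAt P.toFun t₀ :=
    P.contDiffOn.continuousOn.continuousAt (P.isOpen_V.mem_nhds (hKV ht₀K))
  have hφt₀ : P.toFun t₀ = xbar := by
    by_contra hne
    exact clusterPt_iff_not_disjoint.1 (ClusterPt.mono (hcl.continuousAt_comp hφ) ht)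
      (disjoint_nhds_nhds.2 hne)
  exact P.injOn (hKV ht₀K) P.zero_mem (hφt₀.trans P.map_zero.symm)

lemma exists_nearest_param [ProperSpace F] (hp : 1 ≤ p) (P : CpPatch p F M xbar)
    {x : ℕ → E} (hx : Tendsto x atTop (𝓝 xbar)) :
    ∃ t : ℕ → F, (∀ k, t k ∈ P.V) ∧ Tendsto t atTop (𝓝 0) ∧
      Tendsto (P.toFun ∘ t) atTop (𝓝 xbar) ∧
      ∀ᶠ k in atTop, ∀ s, ⟪x k - P.toFun (t k), fderiv ℝ P.toFun (t k) s⟫ = 0 := by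
  obtain ⟨ρ, hρ, hKV⟩ : ∃ ρ > 0, Metric.closedBall (0 : F) ρ ⊆ P.V :=
    Metric.nhds_basis_closedBall.mem_iff.1 (P.isOpen_V.mem_nhds P.zero_mem)
  have hK := isCompact_closedBall (0 : F) ρ
  have hφ : ContinuousOn P.toFun P.V := P.contDiffOn.continuousOn
  have hnearest : ∀ k, ∃ t ∈ Metric.closedBall (0 : F) ρ,
      IsMinOn (fun s => dist (x k) (P.toFun s)) (Metric.closedBall 0 ρ) t := fun k =>
    hK.exists_isMinOn (Metric.nonempty_closedBall.2 hρ.le)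
      ((continuous_const.dist continuous_id).comp_continuousOn (hφ.mono hKV))
  choose t htK hmin using hnearest
  have hy : Tendsto (P.toFun ∘ t) atTop (𝓝 xbar) := by
    have hnear : ∀ k, dist (P.toFun (t k)) xbar ≤ 2 * dist (x k) xbar := fun k => by
      have := isMinOn_iff.1 (hmin k) 0 (Metric.mem_closedBall_self hρ.le)
      rw [P.map_zero] at this
      linarith [dist_triangle_left (P.toFun (t k)) xbar (x k)]
    refine tendsto_iff_dist_tendsto_zero.2 (squeeze_zero (fun _ => dist_nonneg) hnear ?_)
    simpa using (tendsto_iff_dist_tendsto_zero.1 hx).const_mul 2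
  have ht := P.tendsto_zero_of_tendsto_comp hK hKV htK hy
  refine ⟨t, fun k => hKV (htK k), ht, hy, ?_⟩
  filter_upwards [ht (Metric.ball_mem_nhds 0 hρ)] with k hk s
  have hdiff : DifferentiableAt ℝ P.toFun (t k) :=
    (P.contDiffOn.differentiableOn (by exact_mod_cast (zero_lt_one.trans_le hp).ne')
      ).differentiableAt (P.isOpen_V.mem_nhds (hKV (htK k)))
  exact inner_sub_fderiv_eq_zero_of_isLocalMin_dist hdiff
    ((hmin k).isLocalMin (mem_of_superset (Metric.isOpen_ball.mem_nhds hk)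
      Metric.ball_subset_closedBall)) s

lemma exists_subseq_tendsto_unit_normal [ProperSpace F] [ProperSpace E] (hp : 1 ≤ p)
    (P : CpPatch p F M xbar) {x : ℕ → E} (hx : Tendsto x atTop (𝓝 xbar))
    (hxM : ∀ k, x k ∉ M) :
    ∃ (σ : ℕ → ℕ) (y : ℕ → E) (w : E), StrictMono σ ∧ (∀ k, y k ∈ M) ∧
      Tendsto y atTop (𝓝 xbar) ∧ w ∈ P.normal xbar ∧ ‖w‖ = 1 ∧
      Tendsto (fun k => ‖x (σ k) - y k‖⁻¹ • (x (σ k) - y k)) atTop (𝓝 w) := by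
  obtain ⟨t, htV, ht, hy, horth⟩ := P.exists_nearest_param hp hx
  have hne : ∀ k, x k - P.toFun (t k) ≠ 0 := fun k h =>
    hxM k (sub_eq_zero.1 h ▸ P.mem_of_mem_V (htV k))
  obtain ⟨w, hw, σ, hσ, hwσ⟩ := (isCompact_sphere (0 : E) 1).tendsto_subseq
    (x := fun k => ‖x k - P.toFun (t k)‖⁻¹ • (x k - P.toFun (t k)))
    (fun k => mem_sphere_zero_iff_norm.2 (norm_smul_inv_norm (hne k)))
  refine ⟨σ, P.toFun ∘ t ∘ σ, w, hσ, fun k => P.mem_of_mem_V (htV _),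
    hy.comp hσ.tendsto_atTop, ?_, by simpa using hw, hwσ⟩
  rw [mem_normal_base_iff]
  intro s
  have hD : ContinuousAt (fun τ => fderiv ℝ P.toFun τ s) 0 :=
    ((P.contDiffOn.continuousOn_fderiv_of_isOpen P.isOpen_V (by exact_mod_cast hp)).continuousAt
      (P.isOpen_V.mem_nhds P.zero_mem)).clm_apply continuousAt_const
  refine tendsto_nhds_unique (hwσ.inner (hD.tendsto.comp (ht.comp hσ.tendsto_atTop)))
    (tendsto_const_nhds.congr' ?_)
  filter_upwards [hσ.tendsto_atTop.eventually horth] with k hk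
  simp only [Function.comp_apply, real_inner_smul_left, hk s, mul_zero]

end CpPatch

lemma ContinuousAlongNear.lowerSCAlongAt {E : Type*} [NormedAddCommGroup E]
    [InnerProductSpace ℝ E] {A : E → Set E} {S : Set E} {x : E}
    (h : ContinuousAlongNear A S x) (hx : x ∈ S) : LowerSCAlongAt A S x :=
  let ⟨_, hW, hlsc⟩ := h
  hlsc x ⟨hx, mem_of_mem_nhds hW⟩

namespace PartlySmoothAt

variable {p : ℕ∞} {F : Type*} [NormedAddCommGroup F] [InnerProductSpace ℝ F]
  {E : Type*} [NormedAddCommGroup E] [InnerProductSpace ℝ E] [FiniteDimensional ℝ E]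
  {A : E → Set E} {M : Set E} {xbar : E} {P : CpPatch p F M xbar}

lemma normal_eq (h : PartlySmoothAt A M xbar P) : P.normal xbar = Lin (A xbar) :=
  h.2.2.1

lemma lowerSCAlongAt (h : PartlySmoothAt A M xbar P) : LowerSCAlongAt A M xbar :=
  h.2.2.2.2.lowerSCAlongAt P.base_mem

end PartlySmoothAt

section Resolvent

variable {E : Type*} [NormedAddCommGroup E] [InnerProductSpace ℝ E] {A : E → Set E}
  {xbar ubar : E} {ε γ : ℝ} {W : Set E} {J : E → E}

lemma tendsto_resolvent_and_exists_tendsto_locz (hε : 0 < ε) (hγ : γ ≠ 0)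
    (hubar : ubar ∈ A xbar) (hW : W ∈ 𝓝 (xbar + γ • ubar)) (hJ : ContinuousOn J W)
    (hiff : ∀ z ∈ W, ∀ x, (∃ u ∈ Locz A xbar ubar ε x, z = x + γ • u) ↔ x = J z)
    {z : ℕ → E} (hz : Tendsto z atTop (𝓝 (xbar + γ • ubar))) (hzW : ∀ k, z k ∈ W) :
    Tendsto (J ∘ z) atTop (𝓝 xbar) ∧
      ∃ u : ℕ → E, (∀ k, u k ∈ Locz A xbar ubar ε (J (z k))) ∧ Tendsto u atTop (𝓝 ubar) := by
  have hubar_loc : ubar ∈ Locz A xbar ubar ε xbar := mem_locz_iff.2 ⟨by simpa, hubar, by simpa⟩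
  have hJc : J (xbar + γ • ubar) = xbar :=
    ((hiff _ (mem_of_mem_nhds hW) xbar).1 ⟨ubar, hubar_loc, rfl⟩).symm
  have hx : Tendsto (J ∘ z) atTop (𝓝 xbar) := hJc ▸ (hJ.continuousAt hW).tendsto.comp hz
  choose u hu hzu using fun k => (hiff (z k) (hzW k) (J (z k))).2 rfl
  have hu_eq : ∀ k, u k = γ⁻¹ • (z k - J (z k)) := fun k => by
    rw [eq_inv_smul_iff₀ hγ, eq_sub_iff_add_eq', ← hzu k]
  refine ⟨hx, u, hu, ?_⟩
  have := (hz.sub hx).const_smul γ⁻¹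
  rw [add_sub_cancel_left, inv_smul_smul₀ hγ] at this
  exact this.congr fun k => (hu_eq k).symm

lemma eventually_mem_of_eventually_resolvent_mem {M M' : Set E} (hε : 0 < ε)
    (hlsc : LowerSCAlongAt A M xbar) (hubar : ubar ∈ A xbar) (hW : W ∈ 𝓝 (xbar + γ • ubar))
    (hiff : ∀ z ∈ W, ∀ x, (∃ u ∈ Locz A xbar ubar ε x, z = x + γ • u) ↔ x = J z)
    (hJM : ∀ᶠ z in 𝓝 (xbar + γ • ubar), J z ∈ M') :
    ∀ᶠ x in 𝓝 xbar, x ∈ M → x ∈ M' := by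
  by_contra h
  obtain ⟨x, hx, hxM⟩ := frequently_iff_seq_forall.1 (not_eventually.1 h)
  simp only [Classical.not_imp] at hxM
  obtain ⟨u, huA, hu⟩ := hlsc ubar hubar x (fun k => (hxM k).1) hx
  have hz : Tendsto (fun k => x k + γ • u k) atTop (𝓝 (xbar + γ • ubar)) :=
    hx.add (hu.const_smul γ)
  obtain ⟨k, hkW, hkM', hkloc⟩ := ((hz.eventually_mem hW).and ((hz.eventually hJM).and
    (eventually_mem_locz (ubar := ubar) hε hx hu (by simpa) huA))).exists
  exact (hxM k).2 ((hiff _ hkW _).1 ⟨u k, hkloc, rfl⟩ ▸ hkM')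

end Resolvent

lemma CpPatch.eventually_resolvent_mem {F E : Type*} [NormedAddCommGroup F]
    [InnerProductSpace ℝ F] [ProperSpace F] [NormedAddCommGroup E] [InnerProductSpace ℝ E]
    [ProperSpace E] {p : ℕ∞} {M : Set E} {xbar : E} (hp : 1 ≤ p) (P : CpPatch p F M xbar)
    {A : E → Set E} {ubar : E} (hri : ubar ∈ intrinsicInterior ℝ (A xbar))
    (hnormal : P.normal xbar = Lin (A xbar)) (hlsc : LowerSCAlongAt A M xbar)
    {r ε γ : ℝ} (hε : 0 < ε) (hγ : γ ≠ 0)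
    (hmono : ∀ x y u v : E, u ∈ Locz A xbar ubar ε x → v ∈ Locz A xbar ubar ε y →
      (inner ℝ (x - y) (u - v) : ℝ) ≥ -r * ‖x - y‖ ^ 2)
    {W : Set E} (hW : W ∈ 𝓝 (xbar + γ • ubar)) {J : E → E} (hJ : ContinuousOn J W)
    (hiff : ∀ z ∈ W, ∀ x, (∃ u ∈ Locz A xbar ubar ε x, z = x + γ • u) ↔ x = J z) :
    ∀ᶠ z in 𝓝 (xbar + γ • ubar), J z ∈ M := by
  by_contra h
  obtain ⟨z, hz, hzk⟩ := frequently_iff_seq_forall.1 ((not_eventually.1 h).and_eventually hW)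
  obtain ⟨hx, u, hu, hu_lim⟩ := tendsto_resolvent_and_exists_tendsto_locz hε hγ
    (intrinsicInterior_subset hri) hW hJ hiff hz fun k => (hzk k).2
  obtain ⟨σ, y, w, hσ, hyM, hy, hwN, hw1, hw⟩ :=
    P.exists_subseq_tendsto_unit_normal hp hx fun k => (hzk k).1
  obtain ⟨δ, ⟨hδ, hδε⟩, hδA⟩ : ∃ δ ∈ Ioo 0 ε, ubar + δ • w ∈ A xbar :=
    ((eventually_mem_set.2 (Ioo_mem_nhdsGT hε)).and (nhdsWithin_le_nhds
      (eventually_add_smul_mem_of_mem_intrinsicInterior hri (hnormal ▸ hwN : w ∈ Lin _)))).exists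
  obtain ⟨v, hvA, hv⟩ := hlsc _ hδA y hyM hy
  have hv_loc := eventually_mem_locz (ubar := ubar) hε hy hv
    (by simpa [norm_smul, hw1, abs_of_pos hδ]) hvA
  have key := inner_nonneg_of_tendsto_of_hypomonotone
    (by simpa using ((hx.comp hσ.tendsto_atTop).sub hy)) hw (hu_lim.comp hσ.tendsto_atTop) hv
    (hv_loc.mono fun k hk => hmono _ _ _ _ (hu (σ k)) hk)
  rw [sub_add_cancel_left, inner_neg_right, real_inner_smul_right, real_inner_self_eq_norm_sq,
    hw1] at key
  linarith

theorem active_manifold_unique_general {n d₁ d₂ : ℕ} {p : ℕ∞} (hp : 1 ≤ p)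
    (A : EuclideanSpace ℝ (Fin n) → Set (EuclideanSpace ℝ (Fin n))) (M₁ M₂ : Set (EuclideanSpace ℝ (Fin n))) (xbar : EuclideanSpace ℝ (Fin n))
    (P₁ : CpPatch p (EuclideanSpace ℝ (Fin d₁)) M₁ xbar)
    (P₂ : CpPatch p (EuclideanSpace ℝ (Fin d₂)) M₂ xbar)
    (hA₁ : PartlySmoothAt A M₁ xbar P₁) (hA₂ : PartlySmoothAt A M₂ xbar P₂)
    (ubar : EuclideanSpace ℝ (Fin n))
    (hri : ubar ∈ intrinsicInterior ℝ (A xbar))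
    (r ε₀ : ℝ) (hreg : ResolventRegular A xbar ubar r ε₀) :
    ∃ W : Set (EuclideanSpace ℝ (Fin n)), IsOpen W ∧ xbar ∈ W ∧ M₁ ∩ W = M₂ ∩ W := by
  obtain ⟨hr, hε, hmono, hres⟩ := hreg
  obtain ⟨W, hW, J, hJ, hiff⟩ := hres (2 * r)⁻¹ (by positivity)
    (by rw [one_div]; exact inv_strictAnti₀ hr (by linarith))
  have hγ : (2 * r)⁻¹ ≠ 0 := by positivity
  have hubar := intrinsicInterior_subset hri
  have hJM₁ := P₁.eventually_resolvent_mem hp hri hA₁.normal_eq hA₁.lowerSCAlongAt hε hγ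
    hmono hW hJ hiff
  have hJM₂ := P₂.eventually_resolvent_mem hp hri hA₂.normal_eq hA₂.lowerSCAlongAt hε hγ
    hmono hW hJ hiff
  have h₁₂ := eventually_mem_of_eventually_resolvent_mem hε hA₁.lowerSCAlongAt hubar hW hiff hJM₂
  have h₂₁ := eventually_mem_of_eventually_resolvent_mem hε hA₂.lowerSCAlongAt hubar hW hiff hJM₁
  obtain ⟨V, hV, hVopen, hxV⟩ := eventually_nhds_iff.1 (h₁₂.and h₂₁)
  exact ⟨V, hVopen, hxV, Set.ext fun x =>
    ⟨fun ⟨hx, hxV⟩ => ⟨(hV x hxV).1 hx, hxV⟩, fun ⟨hx, hxV⟩ => ⟨(hV x hxV).2 hx, hxV⟩⟩⟩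

/-- uniqueness of the active manifold. -/
theorem active_manifold_unique {n d₁ d₂ : ℕ} {p : ℕ∞} (hp : 1 ≤ p)
    (A : EuclideanSpace ℝ (Fin n) → Set (EuclideanSpace ℝ (Fin n))) (M₁ M₂ : Set (EuclideanSpace ℝ (Fin n))) (xbar : EuclideanSpace ℝ (Fin n))
    (P₁ : CpPatch p (EuclideanSpace ℝ (Fin d₁)) M₁ xbar)
    (P₂ : CpPatch p (EuclideanSpace ℝ (Fin d₂)) M₂ xbar)
    (hA₁ : PartlySmoothAt A M₁ xbar P₁) (hA₂ : PartlySmoothAt A M₂ xbar P₂)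
    (ubar : EuclideanSpace ℝ (Fin n)) (hmem : ubar ∈ A xbar)
    (hri : ubar ∈ intrinsicInterior ℝ (A xbar))
    (r ε₀ : ℝ) (hreg : ResolventRegular A xbar ubar r ε₀) :
    ∃ W : Set (EuclideanSpace ℝ (Fin n)), IsOpen W ∧ xbar ∈ W ∧ M₁ ∩ W = M₂ ∩ W :=
  active_manifold_unique_general hp A M₁ M₂ xbar P₁ P₂ hA₁ hA₂ ubar hri r ε₀ hreg

end
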